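/- For n ≥ 3, the set { y_i y_j − zx : 1 ≤ i < j ≤ n } ∪ { x(y_k − y_n) : 1 ≤ k ≤ n−1 } ∪ { x(y_n² − xz) } is a Gröbner basis of the colon ideal J = I : z with respect to the reverse lexicographic order induced by x > y_1 > ⋯ > y_n > z, where I = (y_i y_j − xz : 1 ≤ i < j ≤ n) is the join-meet ideal of the diamond lattice D_{n+2} in S = K[x, y_1, …, y_n, z]. -/

import Mathlib

open MvPolynomial

noncomputable def xP (K : Type*) [Field K] (n : ℕ) : MvPolynomial (Fin (n + 2)) K := X 0
noncomputable def zP (K : Type*) [Field K] (n : ℕ) : MvPolynomial (Fin (n + 2)) K :=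
  X (Fin.last (n + 1))
noncomputable def yP (K : Type*) [Field K] (n : ℕ) (i : Fin n) : MvPolynomial (Fin (n + 2)) K :=
  X i.succ.castSucc
noncomputable def diamondIdeal (K : Type*) [Field K] (n : ℕ) :
    Ideal (MvPolynomial (Fin (n + 2)) K) :=
  Ideal.span {f | ∃ i j : Fin n, i < j ∧ f = yP K n i * yP K n j - xP K n * zP K n}
def mdeg {σ : Type*} (m : σ →₀ ℕ) : ℕ := m.sum fun _ e => e
def revlexLt {N : ℕ} (a b : Fin N →₀ ℕ) : Prop :=
  mdeg a < mdeg b ∨ (mdeg a = mdeg b ∧ ∃ i, b i < a i ∧ ∀ j, i < j → a j = b j)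
def IsLeadMon {N : ℕ} {K : Type*} [Field K] (f : MvPolynomial (Fin N) K) (m : Fin N →₀ ℕ) :
    Prop :=
  m ∈ f.support ∧ ∀ m' ∈ f.support, m' ≠ m → revlexLt m' m
noncomputable def initialIdeal {N : ℕ} (K : Type*) [Field K]
    (I : Ideal (MvPolynomial (Fin N) K)) : Ideal (MvPolynomial (Fin N) K) :=
  Ideal.span {p | ∃ f ∈ I, ∃ m, IsLeadMon f m ∧ p = monomial m (1 : K)}
def IsGroebnerBasis {N : ℕ} {K : Type*} [Field K] (G : Set (MvPolynomial (Fin N) K))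
    (I : Ideal (MvPolynomial (Fin N) K)) : Prop :=
  G ⊆ (I : Set (MvPolynomial (Fin N) K)) ∧
    initialIdeal K I = Ideal.span {p | ∃ g ∈ G, ∃ m, IsLeadMon g m ∧ p = monomial m (1 : K)}

/-!
For the proposed basis `G ⊆ J = I : z`, dividing by `G` shows that every polynomial is
congruent modulo `J` to a combination of `G`-standard monomials not exceeding its leading
monomial. Hence `G` is a Gröbner basis of `J` as soon as no nonzero element of `J` is supported
on standard monomials.

The standard monomials are `y_k^b z^c` and `x^a y_n^e z^c` with `a ≥ 1`, `e ≤ 1`. If `r ∈ J`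
then `r z ∈ I`, so `r` vanishes on every component of `V(I)` not contained in `z = 0`. On the
coordinate plane with coordinates `y_k, z` the `x`-free standard monomials of `r` become distinct
monomials `s^b t^c`, so they do not occur; on the toric surface `x = s², y_i = st, z = t²` the
remaining ones become the distinct monomials `s^(2a+e) t^(e+2c)`, so `r = 0`.
-/

section RevLex

variable {N : ℕ}

lemma mdeg_eq_degree (a : Fin N →₀ ℕ) : mdeg a = a.degree := rfl

lemma mdeg_add (a b : Fin N →₀ ℕ) : mdeg (a + b) = mdeg a + mdeg b := map_add Finsupp.degree a b

lemma revlexLt_irrefl (a : Fin N →₀ ℕ) : ¬ revlexLt a a := by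
  rintro (h | ⟨-, i, hi, -⟩) <;> omega

lemma revlexLt_trans {a b c : Fin N →₀ ℕ} (hab : revlexLt a b) (hbc : revlexLt b c) :
    revlexLt a c := by
  rcases hab with hab | ⟨eab, i, hi, hai⟩ <;> rcases hbc with hbc | ⟨ebc, j, hj, hbj⟩
  · exact Or.inl (hab.trans hbc)
  · exact Or.inl (ebc ▸ hab)
  · exact Or.inl (eab ▸ hbc)
  refine Or.inr ⟨eab.trans ebc, max i j, ?_, fun k hk => ?_⟩
  · rcases lt_trichotomy i j with h | rfl | h
    · rw [max_eq_right h.le, hai j h]; exact hj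
    · rw [max_self]; exact hj.trans hi
    · rw [max_eq_left h.le, ← hbj i h]; exact hi
  · exact (hai k (lt_of_le_of_lt (le_max_left i j) hk)).trans
      (hbj k (lt_of_le_of_lt (le_max_right i j) hk))

lemma revlexLt_add_left {a b : Fin N →₀ ℕ} (u : Fin N →₀ ℕ) (h : revlexLt a b) :
    revlexLt (u + a) (u + b) := by
  rcases h with h | ⟨e, i, hi, hab⟩
  · exact Or.inl (by rw [mdeg_add, mdeg_add]; omega)
  · exact Or.inr ⟨by rw [mdeg_add, mdeg_add, e], i, by simpa using hi,
      fun j hj => by simp [hab j hj]⟩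

lemma finite_setOf_revlexLt (b : Fin N →₀ ℕ) : {a | revlexLt a b}.Finite :=
  (Finsupp.finite_of_degree_le (mdeg b)).subset fun a h => by
    rcases h with h | ⟨h, -⟩ <;> (show Finsupp.degree a ≤ _; rw [← mdeg_eq_degree]; omega)

-- Predecessors form a finite set, so counting them is a strictly monotone rank.
lemma wellFounded_revlexLt : WellFounded (@revlexLt N) := by
  refine Subrelation.wf (fun {a b} h => ?_) (measure fun b => {a | revlexLt a b}.ncard).wf
  exact Set.ncard_lt_ncard ⟨fun c hc => revlexLt_trans hc h,
    fun hsub => revlexLt_irrefl a (hsub h)⟩ (finite_setOf_revlexLt b)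

end RevLex

section Criterion

variable {N : ℕ} {K : Type*} [Field K]

def IsStandardMon (G : Set (MvPolynomial (Fin N) K)) (ν : Fin N →₀ ℕ) : Prop :=
  ∀ g ∈ G, ∀ t, IsLeadMon g t → ¬ t ≤ ν

lemma IsLeadMon.sub_monomial_mem_restrictSupport {f : MvPolynomial (Fin N) K}
    {m : Fin N →₀ ℕ} (h : IsLeadMon f m) :
    f - monomial m (coeff m f) ∈ restrictSupport K {ν | revlexLt ν m} := by
  classical
  rw [mem_restrictSupport_iff]
  intro ν hν
  rw [Finset.mem_coe, mem_support_iff, coeff_sub, coeff_monomial] at hν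
  by_cases hmν : m = ν
  · subst hmν
    simp at hν
  · rw [if_neg hmν, sub_zero] at hν
    exact h.2 ν (mem_support_iff.2 hν) (Ne.symm hmν)

lemma monomial_mul_mem_restrictSupport_revlexLt {p : MvPolynomial (Fin N) K}
    {t : Fin N →₀ ℕ} (hp : p ∈ restrictSupport K {ν | revlexLt ν t}) (u : Fin N →₀ ℕ) :
    monomial u 1 * p ∈ restrictSupport K {ν | revlexLt ν (u + t)} := by
  have hu : monomial u (1 : K) ∈ restrictSupport K {u} :=
    (monomial_mem_restrictSupport K).2 (Or.inl rfl)
  have hmul := Submodule.mul_mem_mul hu hp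
  rw [← restrictSupport_add] at hmul
  refine restrictSupport_mono K ?_ hmul
  rintro _ ⟨_, rfl, ν, hν, rfl⟩
  exact revlexLt_add_left _ hν

lemma isLeadMon_monomial_sub_monomial {s t : Fin N →₀ ℕ} (h : revlexLt s t) :
    IsLeadMon (monomial t (1 : K) - monomial s 1) t := by
  classical
  have hst : s ≠ t := fun e => revlexLt_irrefl t (e ▸ h)
  refine ⟨?_, fun m hm hmt => ?_⟩
  · simp [mem_support_iff, coeff_monomial, hst]
  · obtain rfl : s = m := by
      by_contra hsm
      simp [mem_support_iff, coeff_monomial, Ne.symm hmt, hsm] at hm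
    exact h

variable {G : Set (MvPolynomial (Fin N) K)} {I : Ideal (MvPolynomial (Fin N) K)}

-- The division algorithm by `G`.
lemma restrictSupport_revlexLt_le_sup (hGI : G ⊆ I) (μ : Fin N →₀ ℕ) :
    restrictSupport K {ν | revlexLt ν μ} ≤
      restrictSupport K {ν | IsStandardMon G ν ∧ revlexLt ν μ} ⊔ I.restrictScalars K := by
  induction μ using wellFounded_revlexLt.induction with
  | _ μ ih =>
  rw [restrictSupport_eq_span, Submodule.span_le]
  rintro _ ⟨ν, hνμ, rfl⟩
  by_cases hν : IsStandardMon G ν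
  · exact Submodule.mem_sup_left ((monomial_mem_restrictSupport K).2 (Or.inl ⟨hν, hνμ⟩))
  obtain ⟨g, hg, t, ht, htν⟩ : ∃ g ∈ G, ∃ t, IsLeadMon g t ∧ t ≤ ν := by
    simpa [IsStandardMon] using hν
  set c := coeff t g
  have hc : c ≠ 0 := mem_support_iff.1 ht.1
  have htail : monomial (ν - t) 1 * (g - monomial t c) ∈
      restrictSupport K {ν' | revlexLt ν' ν} := by
    simpa [tsub_add_cancel_of_le htν] using
      monomial_mul_mem_restrictSupport_revlexLt ht.sub_monomial_mem_restrictSupport (ν - t)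
  have hlower : restrictSupport K {ν' | IsStandardMon G ν' ∧ revlexLt ν' ν} ≤
      restrictSupport K {ν' | IsStandardMon G ν' ∧ revlexLt ν' μ} :=
    restrictSupport_mono K fun ν' h => ⟨h.1, revlexLt_trans h.2 hνμ⟩
  have hν_eq : monomial ν (1 : K) =
      c⁻¹ • (monomial (ν - t) 1 * g) - c⁻¹ • (monomial (ν - t) 1 * (g - monomial t c)) := by
    rw [← smul_sub, ← mul_sub, sub_sub_cancel, monomial_mul, one_mul,
      tsub_add_cancel_of_le htν, smul_monomial, smul_eq_mul, inv_mul_cancel₀ hc]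
  rw [SetLike.mem_coe, show (fun ν => monomial ν (1 : K)) ν = _ from hν_eq]
  refine sub_mem (Submodule.smul_mem _ _ (Submodule.mem_sup_right ?_))
    (Submodule.smul_mem _ _ (sup_le_sup_right hlower _ (ih ν hνμ htail)))
  exact I.mul_mem_left _ (hGI hg)

lemma not_isStandardMon_of_isLeadMon (hGI : G ⊆ I)
    (hstd : ∀ r ∈ I, r ∈ restrictSupport K {ν | IsStandardMon G ν} → r = 0)
    {f : MvPolynomial (Fin N) K} (hf : f ∈ I) {m : Fin N →₀ ℕ} (hm : IsLeadMon f m) :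
    ¬ IsStandardMon G m := by
  intro hm_std
  set c := coeff m f
  obtain ⟨r, hr, i, hi, hri⟩ := Submodule.mem_sup.1
    (restrictSupport_revlexLt_le_sup hGI m hm.sub_monomial_mem_restrictSupport)
  have hrI : monomial m c + r ∈ I := by
    rw [show monomial m c + r = f - i by linear_combination hri]
    exact sub_mem hf hi
  have hr_std : monomial m c + r ∈ restrictSupport K {ν | IsStandardMon G ν} :=
    add_mem ((monomial_mem_restrictSupport K).2 (Or.inl hm_std))
      (restrictSupport_mono K (fun _ h => h.1) hr)
  have hrm : coeff m r = 0 := notMem_support_iff.1 fun h => revlexLt_irrefl m (hr h).2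
  have := congrArg (coeff m) (hstd _ hrI hr_std)
  rw [coeff_add, coeff_monomial, if_pos rfl, hrm, add_zero, coeff_zero] at this
  exact mem_support_iff.1 hm.1 this

theorem isGroebnerBasis_of_forall_mem_restrictSupport (hGI : G ⊆ I)
    (hstd : ∀ r ∈ I, r ∈ restrictSupport K {ν | IsStandardMon G ν} → r = 0) :
    IsGroebnerBasis G I := by
  refine ⟨hGI, le_antisymm (Ideal.span_le.2 ?_) (Ideal.span_le.2 ?_)⟩
  · rintro _ ⟨f, hf, m, hm, rfl⟩
    obtain ⟨g, hg, t, ht, htm⟩ : ∃ g ∈ G, ∃ t, IsLeadMon g t ∧ t ≤ m := by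
      simpa [IsStandardMon] using not_isStandardMon_of_isLeadMon hGI hstd hf hm
    rw [SetLike.mem_coe, show monomial m (1 : K) = monomial (m - t) 1 * monomial t 1 by
      rw [monomial_mul, one_mul, tsub_add_cancel_of_le htm]]
    exact Ideal.mul_mem_left _ _ (Ideal.subset_span ⟨g, hg, t, ht, rfl⟩)
  · rintro _ ⟨g, hg, t, ht, rfl⟩
    exact Ideal.subset_span ⟨g, hGI hg, t, ht, rfl⟩

end Criterion

section Monomials

variable {K : Type*} [Field K]

lemma X_pow_mul_X_pow_eq_monomial {σ : Type*} (a b : σ) (p q : ℕ) :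
    (X a ^ p * X b ^ q : MvPolynomial σ K) =
      monomial (Finsupp.single a p + Finsupp.single b q) 1 := by
  rw [monomial_single_add, ← X_pow_eq_monomial]

lemma single_add_single_le {σ : Type*} {a b : σ} (hab : a ≠ b) {p q : ℕ} {ν : σ →₀ ℕ}
    (hp : p ≤ ν a) (hq : q ≤ ν b) : Finsupp.single a p + Finsupp.single b q ≤ ν := by
  classical
  intro v
  simp only [Finsupp.add_apply, Finsupp.single_apply]
  split_ifs with h1 h2 <;> subst_vars <;> simp_all

lemma aeval_monomial_eq_zero {σ A : Type*} [CommSemiring A] [Algebra K A] {v : σ → A}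
    {ν : σ →₀ ℕ} {i : σ} (hv : v i = 0) (hν : ν i ≠ 0) :
    aeval v (monomial ν (1 : K)) = 0 := by
  rw [aeval_monomial, Finsupp.prod,
    Finset.prod_eq_zero (Finsupp.mem_support_iff.2 hν) (by rw [hv, zero_pow hν]), mul_zero]

lemma aeval_monomial_single_add_single_add_single {σ A : Type*} [CommSemiring A] [Algebra K A]
    (v : σ → A) (a b c : σ) (p q s : ℕ) :
    aeval v (monomial (Finsupp.single a p + Finsupp.single b q + Finsupp.single c s) (1 : K)) =
      v a ^ p * v b ^ q * v c ^ s := by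
  rw [monomial_add_single, monomial_single_add, ← X_pow_eq_monomial]
  simp only [map_mul, map_pow, aeval_X]

lemma coeff_eq_zero_of_aeval_eq_zero {σ τ : Type*} {v : σ → MvPolynomial τ K}
    {r : MvPolynomial σ K} (hr : aeval v r = 0) {ν : σ →₀ ℕ} {w : τ →₀ ℕ}
    (hν : aeval v (monomial ν (1 : K)) = monomial w 1)
    (hother : ∀ ν' ∈ r.support, ν' ≠ ν → coeff w (aeval v (monomial ν' (1 : K))) = 0) :
    coeff ν r = 0 := by
  classical
  have hsum : coeff w (aeval v r) =
      ∑ ν' ∈ r.support, coeff ν' r * coeff w (aeval v (monomial ν' (1 : K))) := by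
    conv_lhs => rw [r.as_sum]
    rw [map_sum, coeff_sum]
    refine Finset.sum_congr rfl fun ν' _ => ?_
    rw [show monomial ν' (coeff ν' r) = C (coeff ν' r) * monomial ν' 1 by
      rw [C_mul_monomial, mul_one], map_mul, aeval_C, algebraMap_eq, coeff_C_mul]
  rw [hr, coeff_zero, Finset.sum_eq_single ν (fun ν' h hne => by rw [hother ν' h hne, mul_zero])
    (fun h => by rw [notMem_support_iff.1 h, zero_mul]), hν, coeff_monomial, if_pos rfl,
    mul_one] at hsum
  exact hsum.symm

end Monomials

section Diamond

variable {K : Type*} [Field K] {n : ℕ}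

lemma succ_castSucc_ne_zero (j : Fin n) : (j.succ.castSucc : Fin (n + 2)) ≠ 0 :=
  Fin.castSucc_ne_zero_iff.2 j.succ_ne_zero

lemma succ_castSucc_ne_last (j : Fin n) : j.succ.castSucc ≠ Fin.last (n + 1) :=
  (Fin.castSucc_lt_last _).ne

-- `⟨n - 1, _⟩ : Fin n` is the paper's `y_n`.
def diamondColonGens (K : Type*) [Field K] (n : ℕ) (hn : 0 < n) :
    Set (MvPolynomial (Fin (n + 2)) K) :=
  {f | ∃ i j : Fin n, i < j ∧ f = yP K n i * yP K n j - zP K n * xP K n} ∪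
    {f | ∃ k : Fin n, (k : ℕ) < n - 1 ∧ f = xP K n * (yP K n k - yP K n ⟨n - 1, by omega⟩)} ∪
    {xP K n * ((yP K n ⟨n - 1, by omega⟩) ^ 2 - xP K n * zP K n)}

lemma yP_mul_yP_sub_mem_diamondIdeal {i j : Fin n} (hij : i ≠ j) :
    yP K n i * yP K n j - xP K n * zP K n ∈ diamondIdeal K n := by
  rcases hij.lt_or_gt with h | h
  · exact Ideal.subset_span ⟨i, j, h, rfl⟩
  · rw [mul_comm (yP K n i)]
    exact Ideal.subset_span ⟨j, i, h, rfl⟩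

lemma mem_diamondIdeal_colon_zP {f : MvPolynomial (Fin (n + 2)) K} :
    f ∈ (diamondIdeal K n).colon (Ideal.span {zP K n}) ↔ f * zP K n ∈ diamondIdeal K n :=
  Submodule.mem_colon_span_singleton

lemma yP_mul_yP_sub_mem_colon {i j : Fin n} (hij : i ≠ j) :
    yP K n i * yP K n j - zP K n * xP K n ∈
      (diamondIdeal K n).colon (Ideal.span {zP K n}) := by
  rw [mem_diamondIdeal_colon_zP, show (yP K n i * yP K n j - zP K n * xP K n) * zP K n =
    zP K n * (yP K n i * yP K n j - xP K n * zP K n) by ring]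
  exact Ideal.mul_mem_left _ _ (yP_mul_yP_sub_mem_diamondIdeal hij)

lemma xP_mul_yP_sub_yP_mem_colon (hn : 2 < n) (k l : Fin n) :
    xP K n * (yP K n k - yP K n l) ∈ (diamondIdeal K n).colon (Ideal.span {zP K n}) := by
  obtain ⟨j, hjk, hjl⟩ := Fin.exists_ne_and_ne_of_two_lt k l hn
  rw [mem_diamondIdeal_colon_zP, show xP K n * (yP K n k - yP K n l) * zP K n =
    yP K n l * (yP K n k * yP K n j - xP K n * zP K n) -
      yP K n k * (yP K n l * yP K n j - xP K n * zP K n) by ring]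
  exact sub_mem (Ideal.mul_mem_left _ _ (yP_mul_yP_sub_mem_diamondIdeal hjk.symm))
    (Ideal.mul_mem_left _ _ (yP_mul_yP_sub_mem_diamondIdeal hjl.symm))

lemma xP_mul_yP_sq_sub_mem_colon (hn : 2 < n) (l : Fin n) :
    xP K n * (yP K n l ^ 2 - xP K n * zP K n) ∈
      (diamondIdeal K n).colon (Ideal.span {zP K n}) := by
  obtain ⟨i, hil, -⟩ := Fin.exists_ne_and_ne_of_two_lt l l hn
  obtain ⟨j, hji, hjl⟩ := Fin.exists_ne_and_ne_of_two_lt i l hn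
  rw [mem_diamondIdeal_colon_zP, show xP K n * (yP K n l ^ 2 - xP K n * zP K n) * zP K n =
    -(yP K n l ^ 2 * (yP K n i * yP K n j - xP K n * zP K n)) +
      yP K n j * yP K n l * (yP K n i * yP K n l - xP K n * zP K n) +
      xP K n * zP K n * (yP K n j * yP K n l - xP K n * zP K n) by ring]
  exact add_mem (add_mem
    (neg_mem (Ideal.mul_mem_left _ _ (yP_mul_yP_sub_mem_diamondIdeal hji.symm)))
    (Ideal.mul_mem_left _ _ (yP_mul_yP_sub_mem_diamondIdeal hil)))
    (Ideal.mul_mem_left _ _ (yP_mul_yP_sub_mem_diamondIdeal hjl))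

lemma diamondColonGens_subset (hn : 2 < n) :
    diamondColonGens K n (by omega) ⊆ (diamondIdeal K n).colon (Ideal.span {zP K n}) := by
  rintro _ ((⟨i, j, hij, rfl⟩ | ⟨k, -, rfl⟩) | rfl)
  · exact yP_mul_yP_sub_mem_colon hij.ne
  · exact xP_mul_yP_sub_yP_mem_colon hn k _
  · exact xP_mul_yP_sq_sub_mem_colon hn _

lemma isLeadMon_yP_mul_yP_sub (i j : Fin n) :
    IsLeadMon (yP K n i * yP K n j - zP K n * xP K n)
      (Finsupp.single i.succ.castSucc 1 + Finsupp.single j.succ.castSucc 1) := by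
  rw [yP, yP, zP, xP, ← pow_one (X _), ← pow_one (X j.succ.castSucc),
    ← pow_one (X (Fin.last _)), ← pow_one (X 0), X_pow_mul_X_pow_eq_monomial,
    X_pow_mul_X_pow_eq_monomial]
  exact isLeadMon_monomial_sub_monomial (Or.inr ⟨by simp [mdeg_eq_degree],
    Fin.last (n + 1), by simp, fun j hj => absurd hj (Fin.le_last j).not_gt⟩)

lemma isLeadMon_xP_mul_yP_sub_yP {k l : Fin n} (hkl : k < l) :
    IsLeadMon (xP K n * (yP K n k - yP K n l))
      (Finsupp.single 0 1 + Finsupp.single k.succ.castSucc 1) := by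
  rw [mul_sub, xP, yP, yP, ← pow_one (X 0), ← pow_one (X k.succ.castSucc),
    ← pow_one (X l.succ.castSucc), X_pow_mul_X_pow_eq_monomial, X_pow_mul_X_pow_eq_monomial]
  have hkl' : (k : ℕ) < l := hkl
  refine isLeadMon_monomial_sub_monomial (Or.inr ⟨by simp [mdeg_eq_degree],
    l.succ.castSucc, ?_, fun j hj => ?_⟩)
  · simp [Fin.ext_iff, hkl'.ne]
  · have hj' : (l : ℕ) + 1 < j := hj
    have h0 : (0 : Fin (n + 2)) ≠ j := (lt_of_le_of_lt (Fin.zero_le _) hj).ne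
    have hk : k.succ.castSucc ≠ j := fun h => by subst h; simp at hj'; omega
    have hl : l.succ.castSucc ≠ j := hj.ne
    simp only [Finsupp.add_apply, Finsupp.single_apply, if_neg h0, if_neg hk, if_neg hl]

lemma isLeadMon_xP_mul_yP_sq_sub (l : Fin n) :
    IsLeadMon (xP K n * (yP K n l ^ 2 - xP K n * zP K n))
      (Finsupp.single 0 1 + Finsupp.single l.succ.castSucc 2) := by
  rw [show xP K n * (yP K n l ^ 2 - xP K n * zP K n) =
    X 0 ^ 1 * X l.succ.castSucc ^ 2 - X 0 ^ 2 * X (Fin.last (n + 1)) ^ 1 by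
      rw [xP, yP, zP]; ring,
    X_pow_mul_X_pow_eq_monomial, X_pow_mul_X_pow_eq_monomial]
  exact isLeadMon_monomial_sub_monomial (Or.inr ⟨by simp [mdeg_eq_degree],
    Fin.last (n + 1), by simp, fun j hj => absurd hj (Fin.le_last j).not_gt⟩)

section Standard

variable {hn : 0 < n} {ν : Fin (n + 2) →₀ ℕ}

lemma IsStandardMon.exists_forall_ne_y_eq_zero
    (h : IsStandardMon (diamondColonGens K n hn) ν) :
    ∃ k : Fin n, ∀ j, j ≠ k → ν j.succ.castSucc = 0 := by
  by_cases hk : ∃ k : Fin n, ν k.succ.castSucc ≠ 0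
  · obtain ⟨k, hk⟩ := hk
    refine ⟨k, fun j hjk => ?_⟩
    by_contra hj
    rcases hjk.lt_or_gt with hlt | hlt
    · refine h _ (Or.inl (Or.inl ⟨j, k, hlt, rfl⟩)) _ (isLeadMon_yP_mul_yP_sub j k) ?_
      exact single_add_single_le (by simpa using hlt.ne) (by omega) (by omega)
    · refine h _ (Or.inl (Or.inl ⟨k, j, hlt, rfl⟩)) _ (isLeadMon_yP_mul_yP_sub k j) ?_
      exact single_add_single_le (by simpa using hlt.ne) (by omega) (by omega)
  · simp only [not_exists, not_not] at hk
    exact ⟨⟨0, hn⟩, fun j _ => hk j⟩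

lemma IsStandardMon.y_eq_zero_of_x_ne_zero (h : IsStandardMon (diamondColonGens K n hn) ν)
    (hx : ν 0 ≠ 0) {j : Fin n} (hj : j ≠ ⟨n - 1, by omega⟩) : ν j.succ.castSucc = 0 := by
  have hjn : (j : ℕ) < n - 1 := by
    have := j.isLt
    have : (j : ℕ) ≠ n - 1 := fun e => hj (Fin.ext e)
    omega
  by_contra hy
  refine h _ (Or.inl (Or.inr ⟨j, hjn, rfl⟩)) _ (isLeadMon_xP_mul_yP_sub_yP hjn) ?_
  exact single_add_single_le (by simp [eq_comm]) (by omega) (by omega)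

lemma IsStandardMon.y_le_one_of_x_ne_zero (h : IsStandardMon (diamondColonGens K n hn) ν)
    (hx : ν 0 ≠ 0) : ν (⟨n - 1, by omega⟩ : Fin n).succ.castSucc ≤ 1 := by
  by_contra hy
  refine h _ (Or.inr rfl) _ (isLeadMon_xP_mul_yP_sq_sub _) ?_
  exact single_add_single_le (by simp) (by omega) (by omega)

end Standard

lemma eq_single_add_single_add_single {ν : Fin (n + 2) →₀ ℕ} {l : Fin n}
    (h : ∀ j, j ≠ l → ν j.succ.castSucc = 0) :
    ν = Finsupp.single 0 (ν 0) + Finsupp.single l.succ.castSucc (ν l.succ.castSucc) +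
      Finsupp.single (Fin.last (n + 1)) (ν (Fin.last (n + 1))) := by
  ext v
  induction v using Fin.lastCases with
  | last => simp
  | cast v =>
    induction v using Fin.cases with
    | zero => simp
    | succ j =>
      by_cases hj : j = l
      · subst hj
        simp
      · have := h j hj
        simp [Ne.symm hj] at this ⊢
        exact this

lemma eq_of_forall_ne_eq_zero {ν ν' : Fin (n + 2) →₀ ℕ} {l : Fin n}
    (h : ∀ j, j ≠ l → ν j.succ.castSucc = 0) (h' : ∀ j, j ≠ l → ν' j.succ.castSucc = 0)
    (hx : ν 0 = ν' 0) (hy : ν l.succ.castSucc = ν' l.succ.castSucc)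
    (hz : ν (Fin.last (n + 1)) = ν' (Fin.last (n + 1))) : ν = ν' := by
  rw [eq_single_add_single_add_single h, eq_single_add_single_add_single h', hx, hy, hz]

lemma single_zero_add_single_one_inj {a b c d : ℕ} :
    Finsupp.single (0 : Fin 2) a + Finsupp.single 1 b =
      Finsupp.single 0 c + Finsupp.single 1 d ↔ a = c ∧ b = d := by
  refine ⟨fun h => ⟨?_, ?_⟩, by rintro ⟨rfl, rfl⟩; rfl⟩
  · simpa using DFunLike.congr_fun h 0
  · simpa using DFunLike.congr_fun h 1

lemma aeval_eq_zero_of_mem_colon {A : Type*} [CommRing A] [IsDomain A] [Algebra K A]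
    {v : Fin (n + 2) → A} (hv : ∀ i j : Fin n, i < j →
      v i.succ.castSucc * v j.succ.castSucc = v 0 * v (Fin.last (n + 1)))
    (hz : v (Fin.last (n + 1)) ≠ 0) {r : MvPolynomial (Fin (n + 2)) K}
    (hr : r ∈ (diamondIdeal K n).colon (Ideal.span {zP K n})) : aeval v r = 0 := by
  have hle : diamondIdeal K n ≤ RingHom.ker (aeval v) := by
    rw [diamondIdeal, Ideal.span_le]
    rintro _ ⟨i, j, hij, rfl⟩
    rw [SetLike.mem_coe, RingHom.mem_ker, map_sub, map_mul, map_mul, yP, yP, xP, zP, aeval_X,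
      aeval_X, aeval_X, aeval_X, hv i j hij, sub_self]
  have hrz := hle (mem_diamondIdeal_colon_zP.1 hr)
  rw [RingHom.mem_ker, map_mul, zP, aeval_X] at hrz
  exact (mul_eq_zero.1 hrz).resolve_right hz

/-- Parametrizes the coordinate plane `x = 0, y_j = 0 (j ≠ k)`, a component of `V(I)`. -/
noncomputable def planeParam (K : Type*) [Field K] {n : ℕ} (k : Fin n) :
    Fin (n + 2) → MvPolynomial (Fin 2) K :=
  fun v => if v = k.succ.castSucc then X 0 else if v = Fin.last (n + 1) then X 1 else 0

/-- `x = s², y_i = st, z = t²` parametrizes the toric component of `V(I)`. -/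
noncomputable def toricParam (K : Type*) [Field K] (n : ℕ) :
    Fin (n + 2) → MvPolynomial (Fin 2) K :=
  fun v => if v = 0 then X 0 ^ 2 else if v = Fin.last (n + 1) then X 1 ^ 2 else X 0 * X 1

section Param

variable (k j : Fin n)

lemma planeParam_zero : planeParam K k 0 = 0 := by
  rw [planeParam, if_neg (succ_castSucc_ne_zero k).symm, if_neg Fin.last_pos.ne]

lemma planeParam_last : planeParam K k (Fin.last (n + 1)) = X 1 := by
  rw [planeParam, if_neg (succ_castSucc_ne_last k).symm, if_pos rfl]

lemma planeParam_succ_castSucc :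
    planeParam K k j.succ.castSucc = if j = k then X 0 else 0 := by
  rw [planeParam, if_neg (succ_castSucc_ne_last j)]
  simp

lemma toricParam_zero : toricParam K n 0 = X 0 ^ 2 := by
  rw [toricParam, if_pos rfl]

lemma toricParam_last : toricParam K n (Fin.last (n + 1)) = X 1 ^ 2 := by
  rw [toricParam, if_neg Fin.last_pos.ne', if_pos rfl]

lemma toricParam_succ_castSucc : toricParam K n j.succ.castSucc = X 0 * X 1 := by
  rw [toricParam, if_neg (succ_castSucc_ne_zero j), if_neg (succ_castSucc_ne_last j)]

end Param

lemma aeval_planeParam_monomial {k : Fin n} {ν : Fin (n + 2) →₀ ℕ} (hx : ν 0 = 0)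
    (hy : ∀ j, j ≠ k → ν j.succ.castSucc = 0) :
    aeval (planeParam K k) (monomial ν (1 : K)) =
      monomial (Finsupp.single 0 (ν k.succ.castSucc) + Finsupp.single 1 (ν (Fin.last (n + 1))))
        1 := by
  conv_lhs => rw [eq_single_add_single_add_single hy]
  rw [aeval_monomial_single_add_single_add_single, hx, pow_zero, one_mul, planeParam_last,
    planeParam_succ_castSucc, if_pos rfl, X_pow_mul_X_pow_eq_monomial]

lemma aeval_toricParam_monomial {l : Fin n} {ν : Fin (n + 2) →₀ ℕ}
    (hy : ∀ j, j ≠ l → ν j.succ.castSucc = 0) :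
    aeval (toricParam K n) (monomial ν (1 : K)) =
      monomial (Finsupp.single 0 (2 * ν 0 + ν l.succ.castSucc) +
        Finsupp.single 1 (ν l.succ.castSucc + 2 * ν (Fin.last (n + 1)))) 1 := by
  conv_lhs => rw [eq_single_add_single_add_single hy]
  rw [aeval_monomial_single_add_single_add_single, toricParam_zero, toricParam_last,
    toricParam_succ_castSucc, ← X_pow_mul_X_pow_eq_monomial]
  ring

variable {hn : 0 < n} {r : MvPolynomial (Fin (n + 2)) K}

lemma apply_zero_ne_zero_of_mem_support
    (hr : r ∈ (diamondIdeal K n).colon (Ideal.span {zP K n}))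
    (hstd : r ∈ restrictSupport K {ν | IsStandardMon (diamondColonGens K n hn) ν})
    {ν : Fin (n + 2) →₀ ℕ} (hν : ν ∈ r.support) : ν 0 ≠ 0 := by
  intro hx
  obtain ⟨k, hk⟩ := (hstd hν).exists_forall_ne_y_eq_zero
  have hr0 : aeval (planeParam K k) r = 0 := by
    refine aeval_eq_zero_of_mem_colon (fun i j hij => ?_)
      (by rw [planeParam_last]; exact X_ne_zero 1) hr
    rw [planeParam_succ_castSucc, planeParam_succ_castSucc, planeParam_zero, zero_mul]
    split_ifs with hi hj
    · exact absurd (hi.trans hj.symm) hij.ne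
    all_goals simp
  refine mem_support_iff.1 hν (coeff_eq_zero_of_aeval_eq_zero hr0
    (aeval_planeParam_monomial hx hk) fun ν' hν' hne => ?_)
  by_cases hx' : ν' 0 = 0
  · by_cases hk' : ∀ j, j ≠ k → ν' j.succ.castSucc = 0
    · rw [aeval_planeParam_monomial hx' hk', coeff_monomial, if_neg]
      rw [single_zero_add_single_one_inj]
      rintro ⟨hy, hz⟩
      exact hne (eq_of_forall_ne_eq_zero hk' hk (hx'.trans hx.symm) hy hz)
    · obtain ⟨j, hjk, hj⟩ : ∃ j, j ≠ k ∧ ν' j.succ.castSucc ≠ 0 := by simpa using hk'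
      rw [aeval_monomial_eq_zero (by rw [planeParam_succ_castSucc, if_neg hjk]) hj, coeff_zero]
  · rw [aeval_monomial_eq_zero (planeParam_zero k) hx', coeff_zero]

theorem eq_zero_of_mem_colon_of_mem_restrictSupport
    (hr : r ∈ (diamondIdeal K n).colon (Ideal.span {zP K n}))
    (hstd : r ∈ restrictSupport K {ν | IsStandardMon (diamondColonGens K n hn) ν}) :
    r = 0 := by
  have hshape : ∀ ν ∈ r.support,
      (∀ j, j ≠ (⟨n - 1, by omega⟩ : Fin n) → ν j.succ.castSucc = 0) ∧
      ν (⟨n - 1, by omega⟩ : Fin n).succ.castSucc ≤ 1 := fun ν hν =>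
    have hx := apply_zero_ne_zero_of_mem_support hr hstd hν
    ⟨fun _ hj => (hstd hν).y_eq_zero_of_x_ne_zero hx hj, (hstd hν).y_le_one_of_x_ne_zero hx⟩
  have hr0 : aeval (toricParam K n) r = 0 :=
    aeval_eq_zero_of_mem_colon
      (fun i j _ => by rw [toricParam_succ_castSucc, toricParam_succ_castSucc, toricParam_zero,
        toricParam_last]; ring)
      (by rw [toricParam_last]; exact pow_ne_zero 2 (X_ne_zero 1)) hr
  ext ν
  rw [coeff_zero]
  by_contra hν
  obtain ⟨hy, he⟩ := hshape ν (mem_support_iff.2 hν)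
  refine hν (coeff_eq_zero_of_aeval_eq_zero hr0 (aeval_toricParam_monomial hy)
    fun ν' hν' hne => ?_)
  obtain ⟨hy', he'⟩ := hshape ν' hν'
  rw [aeval_toricParam_monomial hy', coeff_monomial, if_neg]
  rw [single_zero_add_single_one_inj]
  intro h
  exact hne (eq_of_forall_ne_eq_zero hy' hy (by omega) (by omega) (by omega))

end Diamond

/-- The set `{y_iy_j − zx} ∪ {x(y_k − y_n)} ∪ {x(y_n² − xz)}` is a Gröbner basis of the
colon ideal `J = I : z` w.r.t. the revlex order induced by `x > y_1 > ⋯ > y_n > z`. -/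
theorem groebner_basis_of_diamond_colon_z (K : Type*) [Field K] (n : ℕ) (hn : 3 ≤ n) :
    IsGroebnerBasis
      ({f | ∃ i j : Fin n, i < j ∧ f = yP K n i * yP K n j - zP K n * xP K n} ∪
        {f | ∃ k : Fin n, (k : ℕ) < n - 1 ∧
          f = xP K n * (yP K n k - yP K n ⟨n - 1, by omega⟩)} ∪
        {xP K n * ((yP K n ⟨n - 1, by omega⟩) ^ 2 - xP K n * zP K n)})
      (Submodule.colon (diamondIdeal K n) (Ideal.span {zP K n})) :=
  isGroebnerBasis_of_forall_mem_restrictSupport (diamondColonGens_subset hn)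
    fun _ hr hstd => eq_zero_of_mem_colon_of_mem_restrictSupport (hn := by omega) hr hstd
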